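/- Suppose u, p solve the coupled discrete-in-time system a(u^{n+1},v) + g(p^{n+1},v) = 0 and d((u^{n+1}−u^n)/τ, q) + c((p^{n+1}−p^n)/τ, q) + b(p^{n+1},q) = 0 for all test functions, with a symmetric coercive, b and c positive semidefinite symmetric, and the duality g(p,v) = −d(v,p). Then the discrete energy E^n = (1/2)a(u^n,u^n) + (1/2)c(p^n,p^n) is nonincreasing: E^{n+1} ≤ E^n. -/

import Mathlib

/-!
Testing the momentum equation at step `n + 1` with `u (n+1) - u n` and the flow equation at step
`n` with `τ • p (n+1)` makes the coupling terms cancel through the duality `g p v = -dform v p`,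
leaving `a(u¹, u¹ - u⁰) + c(p¹ - p⁰, p¹) = -τ b(p¹, p¹) ≤ 0`. For a symmetric positive semidefinite
form, `2 a(x, x - y) = a(x, x) - a(y, y) + a(x - y, x - y) ≥ a(x, x) - a(y, y)`, so the left side
bounds the energy increment from above.
-/

lemma two_mul_apply_sub_eq_of_symm {R M : Type*} [CommRing R] [AddCommGroup M] [Module R M]
    {a : M →ₗ[R] M →ₗ[R] R} (h_symm : ∀ u v, a u v = a v u) (x y : M) :
    2 * a x (x - y) = a x x - a y y + a (x - y) (x - y) := by
  simp only [map_sub, LinearMap.sub_apply]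
  rw [h_symm y x]
  ring

lemma half_apply_self_sub_half_le {R M : Type*} [Field R] [LinearOrder R]
    [IsStrictOrderedRing R] [AddCommGroup M] [Module R M] {a : M →ₗ[R] M →ₗ[R] R}
    (h_symm : ∀ u v, a u v = a v u) (h_pos : ∀ u, 0 ≤ a u u) (x y : M) :
    (1 / 2) * a x x - (1 / 2) * a y y ≤ a x (x - y) := by
  have := two_mul_apply_sub_eq_of_symm h_symm x y
  linarith [h_pos (x - y)]

lemma coupled_scheme_step_identity {R V Q : Type*} [Field R] [AddCommGroup V] [Module R V]
    [AddCommGroup Q] [Module R Q] {a : V →ₗ[R] V →ₗ[R] R} {c b : Q →ₗ[R] Q →ₗ[R] R}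
    {g : Q →ₗ[R] V →ₗ[R] R} {dform : V →ₗ[R] Q →ₗ[R] R} (hdual : ∀ p v, g p v = -dform v p)
    {τ : R} (hτ : τ ≠ 0) {u₀ u₁ : V} {p₀ p₁ : Q}
    (h₁ : ∀ v, a u₁ v + g p₁ v = 0)
    (h₂ : ∀ q, dform (τ⁻¹ • (u₁ - u₀)) q + c (τ⁻¹ • (p₁ - p₀)) q + b p₁ q = 0) :
    a u₁ (u₁ - u₀) + c (p₁ - p₀) p₁ + τ * b p₁ p₁ = 0 := by
  have hmom := h₁ (u₁ - u₀)
  have hflow := h₂ p₁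
  rw [hdual] at hmom
  simp only [map_smul, LinearMap.smul_apply, smul_eq_mul] at hflow
  calc a u₁ (u₁ - u₀) + c (p₁ - p₀) p₁ + τ * b p₁ p₁
      = τ * (τ⁻¹ * dform (u₁ - u₀) p₁ + τ⁻¹ * c (p₁ - p₀) p₁ + b p₁ p₁) := by
        rw [mul_add, mul_add, ← mul_assoc, ← mul_assoc, mul_inv_cancel₀ hτ]
        linear_combination hmom
    _ = 0 := by rw [hflow, mul_zero]

/-- Energy decay for the fully coupled implicit discretization of the Biot
system: with a, c symmetric positive semidefinite, b positive semidefinite,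
and the duality g(p,v) = −d(v,p), the discrete energy
E^n = (1/2)a(u^n,u^n) + (1/2)c(p^n,p^n) is nonincreasing. -/
theorem coupled_scheme_energy_decay
    {V Q : Type*} [AddCommGroup V] [Module ℝ V] [AddCommGroup Q] [Module ℝ Q]
    (a : V →ₗ[ℝ] V →ₗ[ℝ] ℝ) (c : Q →ₗ[ℝ] Q →ₗ[ℝ] ℝ) (b : Q →ₗ[ℝ] Q →ₗ[ℝ] ℝ)
    (g : Q →ₗ[ℝ] V →ₗ[ℝ] ℝ) (dform : V →ₗ[ℝ] Q →ₗ[ℝ] ℝ)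
    (ha_symm : ∀ u v, a u v = a v u) (ha_pos : ∀ u, 0 ≤ a u u)
    (hc_symm : ∀ p q, c p q = c q p) (hc_pos : ∀ p, 0 ≤ c p p)
    (hb_pos : ∀ p, 0 ≤ b p p)
    (hdual : ∀ p v, g p v = -dform v p)
    (τ : ℝ) (hτ : 0 < τ)
    (u : ℕ → V) (p : ℕ → Q)
    (heq1 : ∀ n, ∀ v : V, a (u n) v + g (p n) v = 0)
    (heq2 : ∀ n, ∀ q : Q,
      dform ((τ⁻¹ : ℝ) • (u (n + 1) - u n)) q
        + c ((τ⁻¹ : ℝ) • (p (n + 1) - p n)) q + b (p (n + 1)) q = 0) :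
    ∀ n, (1 / 2) * a (u (n + 1)) (u (n + 1)) + (1 / 2) * c (p (n + 1)) (p (n + 1)) ≤
      (1 / 2) * a (u n) (u n) + (1 / 2) * c (p n) (p n) := by
  intro n
  have hstep := coupled_scheme_step_identity hdual hτ.ne' (heq1 (n + 1)) (heq2 n)
  have ha := half_apply_self_sub_half_le ha_symm ha_pos (u (n + 1)) (u n)
  have hc := half_apply_self_sub_half_le hc_symm hc_pos (p (n + 1)) (p n)
  rw [hc_symm (p (n + 1)) (p (n + 1) - p n)] at hc
  linarith [mul_nonneg hτ.le (hb_pos (p (n + 1)))]
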